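/- Let $U\subset\mathbb{C}^k$ be open and let $\varphi:U\to\mathbb{R}$ be a Borel function. Suppose there exist: (a) a negative plurisubharmonic function $u$ on $U$ with $|\varphi|\le -u$ everywhere; (b) a pluripolar Borel set $E$ such that for every $x_0\in U\setminus E$ there are finitely many bounded psh functions $v_1,\dots,v_m$ on $U$ and $\delta>0$ with $\varphi$ continuous at $x_0$ along the set $V=\bigcap_j\{|v_j-v_j(x_0)|<\delta\}$ (i.e. $\varphi(x')\to\varphi(x_0)$ as $x'\to x_0$, $x'\in V$), and $u(x_0)>-\infty$. Then every $x_0\in U\setminus E$ is a Lebesgue point of $\varphi$: $\lim_{r\to0}\frac{1}{\mathrm{Leb}(B(x_0,r))}\int_{B(x_0,r)}|\varphi-\varphi(x_0)|\,d\mathrm{Leb}=0$. -/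

import Mathlib

open MeasureTheory Metric Filter
open scoped ENNReal Topology

noncomputable section

/-- `ℂ^k` with its Euclidean structure. -/
abbrev Ck (k : ℕ) := EuclideanSpace ℂ (Fin k)

instance (k : ℕ) : MeasurableSpace (Ck k) := borel _
instance (k : ℕ) : BorelSpace (Ck k) := ⟨rfl⟩

/-- A plurisubharmonic function on an open set `U ⊆ ℂ^k`, with values in `ℝ ∪ {-∞}`
(modeled as `EReal`): upper semicontinuous, nowhere `+∞`, locally integrable with `-∞` locus
Lebesgue-negligible, and satisfying the sub-mean value inequality on closed balls. -/
structure IsPSH {k : ℕ} (U : Set (Ck k)) (u : Ck k → EReal) : Prop where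
  ne_top : ∀ x ∈ U, u x ≠ ⊤
  bot_null : volume {x ∈ U | u x = ⊥} = 0
  loc_int : LocallyIntegrableOn (fun y => (u y).toReal) U volume
  usc : UpperSemicontinuousOn u U
  submean : ∀ x ∈ U, ∀ r > 0, closedBall x r ⊆ U →
    u x ≤ ((⨍ y in closedBall x r, (u y).toReal ∂volume : ℝ) : EReal)


/-- A set `A ⊆ U` is pluripolar if it is contained in the `-∞` locus of a psh function on `U`
(not identically `-∞`, as built into `IsPSH`). -/
def Pluripolar {k : ℕ} (U A : Set (Ck k)) : Prop :=
  ∃ w : Ck k → EReal, IsPSH U w ∧ ∀ x ∈ A, w x = ⊥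

/-! A plurisubharmonic function `w` has a Lebesgue point at every `x` with `w x > -∞`: the
sub-mean value inequality makes the mean of `w x - w` over `B(x, r)` nonpositive, and upper
semicontinuity gives `w - w x ≤ ε` on small balls, hence `⨍ |w - w x| ≤ 2ε` on them.

Near `x₀`, the function `|φ - φ x₀|` is below `ε` on the plurifine neighbourhood
`V = ⋂ⱼ {|vⱼ - vⱼ x₀| < δ}`. Off `V` some `|vⱼ - vⱼ x₀|` is at least `δ`, so with `a = u x₀`,
`|φ - φ x₀| ≤ -u - a ≤ |u - a| + (-2a / δ) ∑ⱼ |vⱼ - vⱼ x₀|`.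
Averaging over `B(x₀, r)` and applying the first fact to `u` and to each `vⱼ` proves the claim. -/

lemma tendsto_zero_of_forall_eventually_le_add {α : Type*} {l : Filter α} {A F : α → ℝ}
    (hA : ∀ᶠ x in l, 0 ≤ A x) (hF : Tendsto F l (𝓝 0))
    (h : ∀ ε > 0, ∀ᶠ x in l, A x ≤ ε + F x) : Tendsto A l (𝓝 0) := by
  rw [Metric.tendsto_nhds]
  intro ε hε
  filter_upwards [hA, h (ε / 2) (half_pos hε), hF.eventually (gt_mem_nhds (half_pos hε))]
    with x hA0 hAF hFε
  rw [Real.dist_eq, sub_zero, abs_of_nonneg hA0]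
  linarith

lemma eventually_nhdsGT_closedBall_subset {X : Type*} [PseudoMetricSpace X] {x : X} {N : Set X}
    (hN : N ∈ 𝓝 x) : ∀ᶠ r in 𝓝[>] (0 : ℝ), 0 < r ∧ closedBall x r ⊆ N :=
  eventually_mem_nhdsWithin.and (nhdsWithin_le_nhds (eventually_closedBall_subset hN))

lemma EReal.le_neg_toReal_of_coe_le_neg {p : ℝ} {w : EReal} (h : (p : EReal) ≤ -w)
    (hw : w ≠ ⊥) : p ≤ -w.toReal := by
  induction w using EReal.rec with
  | bot => exact absurd rfl hw
  | coe w => exact_mod_cast h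
  | top => simp at h

lemma abs_sub_le_of_abs_le_neg {p q f a d δ : ℝ} (hp : |p| ≤ -f) (hq : |q| ≤ -a) (hδ : 0 < δ)
    (hd : δ ≤ d) : |p - q| ≤ |f - a| + -2 * a / δ * d := by
  have hC : 0 ≤ -2 * a / δ := div_nonneg (by linarith [abs_nonneg q]) hδ.le
  have hδd : -2 * a ≤ -2 * a / δ * d :=
    calc -2 * a = -2 * a / δ * δ := (div_mul_cancel₀ _ hδ.ne').symm
      _ ≤ -2 * a / δ * d := mul_le_mul_of_nonneg_left hd hC
  calc |p - q| ≤ |p| + |q| := abs_sub _ _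
    _ ≤ (a - f) + -2 * a := by linarith
    _ ≤ |f - a| + -2 * a / δ * d := add_le_add (by rw [abs_sub_comm]; exact le_abs_self _) hδd

namespace MeasureTheory

lemma ball_ae_eq_closedBall {E : Type*} [NormedAddCommGroup E] [NormedSpace ℝ E]
    [MeasurableSpace E] [BorelSpace E] [FiniteDimensional ℝ E] (μ : Measure E)
    [μ.IsAddHaarMeasure] (x : E) {r : ℝ} (hr : r ≠ 0) : ball x r =ᵐ[μ] closedBall x r := by
  rw [← ball_union_sphere]
  exact (union_ae_eq_left_of_ae_eq_empty
    (ae_eq_empty.2 (Measure.addHaar_sphere_of_ne_zero μ x hr))).symm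

lemma LocallyIntegrableOn.integrableOn_ball {X : Type*} [PseudoMetricSpace X] [ProperSpace X]
    [MeasurableSpace X] {μ : Measure X} {f : X → ℝ} {U : Set X} (hf : LocallyIntegrableOn f U μ)
    {x : X} {r : ℝ} (hsub : closedBall x r ⊆ U) : IntegrableOn f (ball x r) μ :=
  (hf.integrableOn_compact_subset hsub (isCompact_closedBall x r)).mono_set
    ball_subset_closedBall

section SetAverage

variable {α : Type*} [MeasurableSpace α] {μ : Measure α} {s : Set α}

lemma setAverage_nonneg {f : α → ℝ} (hf : ∀ x, 0 ≤ f x) : 0 ≤ ⨍ x in s, f x ∂μ := by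
  rw [setAverage_eq]
  exact smul_nonneg (by positivity) (integral_nonneg hf)

lemma setAverage_le_of_setIntegral_le_mul {f : α → ℝ} {c : ℝ} (hs : 0 < μ.real s)
    (h : ∫ x in s, f x ∂μ ≤ c * μ.real s) : ⨍ x in s, f x ∂μ ≤ c := by
  rw [setAverage_eq, smul_eq_mul, inv_mul_le_iff₀ hs, mul_comm]
  exact h

lemma setAverage_le_of_ae_le_add_mul_sum {ι : Type*} (hs0 : μ s ≠ 0) (hs : μ s ≠ ∞)
    {f g : α → ℝ} {h : ι → α → ℝ} {t : Finset ι} {ε C : ℝ} (hf0 : 0 ≤ᵐ[μ.restrict s] f)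
    (hg : IntegrableOn g s μ) (hh : ∀ i ∈ t, IntegrableOn (h i) s μ)
    (hfg : ∀ᵐ x ∂μ.restrict s, f x ≤ ε + g x + C * ∑ i ∈ t, h i x) :
    ⨍ x in s, f x ∂μ ≤ ε + (⨍ x in s, g x ∂μ + C * ∑ i ∈ t, ⨍ x in s, h i x ∂μ) := by
  refine setAverage_le_of_setIntegral_le_mul (ENNReal.toReal_pos hs0 hs) ?_
  have hε : IntegrableOn (fun _ => ε) s μ := integrableOn_const hs
  have hεg : IntegrableOn (fun x => ε + g x) s μ := hε.add hg
  have hsum : IntegrableOn (fun x => C * ∑ i ∈ t, h i x) s μ :=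
    (integrable_finsetSum t hh).const_mul C
  calc ∫ x in s, f x ∂μ ≤ ∫ x in s, (ε + g x + C * ∑ i ∈ t, h i x) ∂μ :=
        integral_mono_of_nonneg hf0 (hεg.add hsum) hfg
    _ = μ.real s * ε + ∫ x in s, g x ∂μ + C * ∑ i ∈ t, ∫ x in s, h i x ∂μ := by
        rw [integral_add hεg hsum, integral_add hε hg, integral_const_mul,
          integral_finsetSum t hh, setIntegral_const, smul_eq_mul]
    _ = (ε + (⨍ x in s, g x ∂μ + C * ∑ i ∈ t, ⨍ x in s, h i x ∂μ)) * μ.real s := by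
        simp only [← measure_smul_setAverage _ hs, smul_eq_mul, ← Finset.mul_sum]
        ring

end SetAverage

end MeasureTheory

namespace IsPSH

variable {k : ℕ} {U : Set (Ck k)} {w : Ck k → EReal}

lemma ae_restrict_ne_bot (hw : IsPSH U w) {s : Set (Ck k)} (hs : MeasurableSet s)
    (hsU : s ⊆ U) : ∀ᵐ y ∂volume.restrict s, w y ≠ ⊥ := by
  rw [ae_restrict_iff' hs, ae_iff]
  refine measure_mono_null (fun y hy => ?_) hw.bot_null
  obtain ⟨hys, hwy⟩ := Classical.not_imp.1 hy
  exact ⟨hsU hys, not_not.1 hwy⟩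

lemma toReal_mul_le_setIntegral_ball (hw : IsPSH U w) {x : Ck k} (hx : x ∈ U) (hwx : w x ≠ ⊥)
    {r : ℝ} (hr : 0 < r) (hsub : closedBall x r ⊆ U) :
    (w x).toReal * volume.real (ball x r) ≤ ∫ y in ball x r, (w y).toReal := by
  have h := hw.submean x hx r hr hsub
  rw [← EReal.coe_toReal (hw.ne_top x hx) hwx, EReal.coe_le_coe_iff,
    ← setAverage_congr (ball_ae_eq_closedBall volume x hr.ne')] at h
  rw [← measure_smul_setAverage _ measure_ball_lt_top.ne, smul_eq_mul, mul_comm]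
  exact mul_le_mul_of_nonneg_left h measureReal_nonneg

theorem tendsto_setAverage_abs_sub_ball (hU : IsOpen U) (hw : IsPSH U w) {x : Ck k}
    (hx : x ∈ U) (hwx : w x ≠ ⊥) :
    Tendsto (fun r => ⨍ y in ball x r, |(w y).toReal - (w x).toReal|) (𝓝[>] 0) (𝓝 0) := by
  set a := (w x).toReal
  refine tendsto_zero_of_forall_eventually_le_add (F := fun _ => 0)
    (Eventually.of_forall fun r => setAverage_nonneg fun y => abs_nonneg _) tendsto_const_nhds
    fun ε hε => ?_
  have hlt : {y | w y < ((a + ε / 2 : ℝ) : EReal)} ∈ 𝓝 x := by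
    have hwx' : w x < ((a + ε / 2 : ℝ) : EReal) := by
      rw [← EReal.coe_toReal (hw.ne_top x hx) hwx]
      exact_mod_cast (by linarith : a < a + ε / 2)
    have h := hw.usc x hx _ hwx'
    rwa [nhdsWithin_eq_nhds.2 (hU.mem_nhds hx)] at h
  filter_upwards [eventually_nhdsGT_closedBall_subset (inter_mem (hU.mem_nhds hx) hlt)]
    with r ⟨hr, hsub⟩
  have hsubU : closedBall x r ⊆ U := fun y hy => (hsub hy).1
  have hfin : volume (ball x r) ≠ ∞ := measure_ball_lt_top.ne
  have hint := hw.loc_int.integrableOn_ball hsubU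
  have hconst : IntegrableOn (fun _ => ε + a) (ball x r) := integrableOn_const hfin
  have hpt : ∀ᵐ y ∂volume.restrict (ball x r), |(w y).toReal - a| ≤ ε + a - (w y).toReal := by
    filter_upwards [ae_restrict_mem measurableSet_ball,
      hw.ae_restrict_ne_bot measurableSet_ball (ball_subset_closedBall.trans hsubU)]
      with y hy hyb
    have h := (hsub (ball_subset_closedBall hy)).2
    rw [Set.mem_ofPred_eq, ← EReal.coe_toReal (hw.ne_top y (hsubU (ball_subset_closedBall hy))) hyb,
      EReal.coe_lt_coe_iff] at h
    rw [abs_le]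
    constructor <;> linarith
  refine setAverage_le_of_setIntegral_le_mul
    (ENNReal.toReal_pos (measure_ball_pos volume x hr).ne' hfin) ?_
  calc ∫ y in ball x r, |(w y).toReal - a| ≤ ∫ y in ball x r, (ε + a - (w y).toReal) :=
        integral_mono_of_nonneg (Eventually.of_forall fun y => abs_nonneg _)
          (hconst.sub hint) hpt
    _ = (ε + a) * volume.real (ball x r) - ∫ y in ball x r, (w y).toReal := by
        rw [integral_sub hconst hint, setIntegral_const, smul_eq_mul,
          mul_comm]
    _ ≤ (ε + 0) * volume.real (ball x r) := by
        linarith [hw.toReal_mul_le_setIntegral_ball hx hwx hr hsubU]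

end IsPSH

lemma eventually_abs_sub_le_of_tendsto_nhdsWithin {X ι : Type*} [TopologicalSpace X] [Fintype ι]
    {U : Set X} {x0 : X} (hU : U ∈ 𝓝 x0) {φ : X → ℝ} {u : X → EReal}
    (hbound : ∀ x ∈ U, ((|φ x| : ℝ) : EReal) ≤ -u x) (hux0 : u x0 ≠ ⊥) {v : ι → X → ℝ} {δ : ℝ}
    (hδ : 0 < δ) (hcont : Tendsto φ (𝓝[{x | ∀ j, |v j x - v j x0| < δ} \ {x0}] x0) (𝓝 (φ x0)))
    {ε : ℝ} (hε : 0 < ε) :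
    ∀ᶠ y in 𝓝 x0, y ∈ U ∧ (u y ≠ ⊥ → |φ y - φ x0| ≤
      ε + |(u y).toReal - (u x0).toReal| + -2 * (u x0).toReal / δ * ∑ j, |v j y - v j x0|) := by
  have hφx0 := EReal.le_neg_toReal_of_coe_le_neg (hbound x0 (mem_of_mem_nhds hU)) hux0
  have hC : 0 ≤ -2 * (u x0).toReal / δ :=
    div_nonneg (by linarith [abs_nonneg (φ x0)]) hδ.le
  have hφε := hcont.eventually (ball_mem_nhds (φ x0) hε)
  rw [eventually_nhdsWithin_iff] at hφε
  filter_upwards [hU, hφε] with y hyU hyV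
  refine ⟨hyU, fun hyb => ?_⟩
  have hsum : 0 ≤ -2 * (u x0).toReal / δ * ∑ j, |v j y - v j x0| :=
    mul_nonneg hC (Finset.sum_nonneg fun j _ => abs_nonneg _)
  have hux := abs_nonneg ((u y).toReal - (u x0).toReal)
  rcases eq_or_ne y x0 with rfl | hyx
  · rw [sub_self, abs_zero]
    linarith
  by_cases hV : ∀ j, |v j y - v j x0| < δ
  · have h := hyV ⟨hV, hyx⟩
    rw [Real.dist_eq] at h
    linarith
  · push Not at hV
    obtain ⟨j, hj⟩ := hV
    have h := abs_sub_le_of_abs_le_neg (EReal.le_neg_toReal_of_coe_le_neg (hbound y hyU) hyb)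
      hφx0 hδ (hj.trans (Finset.single_le_sum (fun j _ => abs_nonneg (v j y - v j x0))
        (Finset.mem_univ j)))
    linarith

lemma IsPSH.eventually_setAverage_abs_sub_le {k : ℕ} {U : Set (Ck k)} {ι : Type*} [Fintype ι]
    {u : Ck k → EReal} (hu : IsPSH U u) {v : ι → Ck k → ℝ}
    (hv : ∀ j, LocallyIntegrableOn (v j) U) {φ : Ck k → ℝ} {x0 : Ck k} {ε C : ℝ}
    (hpt : ∀ᶠ y in 𝓝 x0, y ∈ U ∧ (u y ≠ ⊥ → |φ y - φ x0| ≤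
      ε + |(u y).toReal - (u x0).toReal| + C * ∑ j, |v j y - v j x0|)) :
    ∀ᶠ r in 𝓝[>] 0, ⨍ y in ball x0 r, |φ y - φ x0| ≤
      ε + ((⨍ y in ball x0 r, |(u y).toReal - (u x0).toReal|) +
        C * ∑ j, ⨍ y in ball x0 r, |v j y - v j x0|) := by
  filter_upwards [eventually_nhdsGT_closedBall_subset hpt] with r ⟨hr, hsub⟩
  have hsubU : closedBall x0 r ⊆ U := fun y hy => (hsub hy).1
  have hfin : volume (ball x0 r) < ∞ := measure_ball_lt_top
  refine setAverage_le_of_ae_le_add_mul_sum (measure_ball_pos volume x0 hr).ne' hfin.ne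
    (Eventually.of_forall fun y => abs_nonneg _)
    ((hu.loc_int.integrableOn_ball hsubU).sub (integrableOn_const hfin.ne)).abs
    (fun j _ => (((hv j).integrableOn_ball hsubU).sub (integrableOn_const hfin.ne)).abs) ?_
  filter_upwards [ae_restrict_mem measurableSet_ball,
    hu.ae_restrict_ne_bot measurableSet_ball (ball_subset_closedBall.trans hsubU)] with y hy hyb
  exact (hsub (ball_subset_closedBall hy)).2 hyb

theorem stmt11_general (k : ℕ) (U : Set (Ck k)) (hU : IsOpen U)
    (φ : Ck k → ℝ)
    (u : Ck k → EReal) (hu : IsPSH U u)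
    (hbound : ∀ x ∈ U, ((|φ x| : ℝ) : EReal) ≤ -u x)
    (E : Set (Ck k))
    (hfine : ∀ x0 ∈ U \ E, u x0 ≠ ⊥ ∧
      ∃ (m : ℕ) (v : Fin m → Ck k → ℝ) (δ : ℝ), 0 < δ ∧
        (∀ j, IsPSH U (fun x => ((v j x : ℝ) : EReal))) ∧
        (∀ j, ∃ C : ℝ, ∀ x ∈ U, |v j x| ≤ C) ∧
        Tendsto φ (𝓝[{x | ∀ j, |v j x - v j x0| < δ} \ {x0}] x0) (𝓝 (φ x0))) :
    ∀ x0 ∈ U \ E,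
      Tendsto (fun r : ℝ =>
          (∫ y in ball x0 r, |φ y - φ x0| ∂volume) / (volume (ball x0 r)).toReal)
        (𝓝[>] 0) (𝓝 0) := by
  intro x0 hx0
  obtain ⟨hux0, m, v, δ, hδ, hv, -, hcont⟩ := hfine x0 hx0
  have hv_int (j : Fin m) : LocallyIntegrableOn (v j) U := by
    simpa only [EReal.toReal_coe] using (hv j).loc_int
  have hv_leb (j : Fin m) :
      Tendsto (fun r => ⨍ y in ball x0 r, |v j y - v j x0|) (𝓝[>] 0) (𝓝 0) := by
    simpa using (hv j).tendsto_setAverage_abs_sub_ball hU hx0.1 (EReal.coe_ne_bot _)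
  have hF := (hu.tendsto_setAverage_abs_sub_ball hU hx0.1 hux0).add
    ((tendsto_finsetSum Finset.univ fun j _ => hv_leb j).const_mul (-2 * (u x0).toReal / δ))
  rw [Finset.sum_const_zero, mul_zero, add_zero] at hF
  have hA := tendsto_zero_of_forall_eventually_le_add
    (Eventually.of_forall fun r => setAverage_nonneg fun y => abs_nonneg (φ y - φ x0)) hF
    fun ε hε => hu.eventually_setAverage_abs_sub_le hv_int
      (eventually_abs_sub_le_of_tendsto_nhdsWithin (hU.mem_nhds hx0.1) hbound hux0 hδ hcont hε)
  simpa only [setAverage_eq, smul_eq_mul, measureReal_def, inv_mul_eq_div] using hA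

/-- let `φ : U → ℝ` be Borel. Suppose (a) `|φ| ≤ -u` everywhere on `U` for a
negative psh `u`; (b) there is a pluripolar Borel set `E` such that every `x₀ ∈ U \ E`
satisfies `u(x₀) > -∞` and `φ` is continuous at `x₀` along a plurifine neighborhood
`V = ⋂ⱼ {|vⱼ - vⱼ(x₀)| < δ}` given by finitely many bounded psh functions. Then every
`x₀ ∈ U \ E` is a Lebesgue point of `φ`. -/
theorem stmt11 (k : ℕ) (U : Set (Ck k)) (hU : IsOpen U)
    (φ : Ck k → ℝ) (hφ : Measurable φ)
    (u : Ck k → EReal) (hu : IsPSH U u) (huneg : ∀ x ∈ U, u x ≤ 0)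
    (hbound : ∀ x ∈ U, ((|φ x| : ℝ) : EReal) ≤ -u x)
    (E : Set (Ck k)) (hE : MeasurableSet E) (hEpp : Pluripolar U E)
    (hfine : ∀ x0 ∈ U \ E, u x0 ≠ ⊥ ∧
      ∃ (m : ℕ) (v : Fin m → Ck k → ℝ) (δ : ℝ), 0 < δ ∧
        (∀ j, IsPSH U (fun x => ((v j x : ℝ) : EReal))) ∧
        (∀ j, ∃ C : ℝ, ∀ x ∈ U, |v j x| ≤ C) ∧
        Tendsto φ (𝓝[{x | ∀ j, |v j x - v j x0| < δ} \ {x0}] x0) (𝓝 (φ x0))) :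
    ∀ x0 ∈ U \ E,
      Tendsto (fun r : ℝ =>
          (∫ y in ball x0 r, |φ y - φ x0| ∂volume) / (volume (ball x0 r)).toReal)
        (𝓝[>] 0) (𝓝 0) :=
  stmt11_general k U hU φ u hu hbound E hfine
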